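/- Let P = 𝔽₂[y₁, y₂, y₃, b₁, b₂, z] be the polynomial ring over the field with two elements in six variables, let I ⊆ P be the ideal generated by y₁y₂, y₁y₃, y₂y₃, y₃², y₂b₁, y₃b₁, y₁b₂, y₃b₂, b₁b₂, b₁² + y₁²z, b₂² + y₂²z, let A = P/I, and let k = z + b₁ + y₁² + b₂ + y₂². In the quotient ring A/(k), the annihilator ideal of the image of the element y₁z + y₁b₁ + y₂z + y₂b₂ equals the ideal generated by the image of y₃. -/

import Mathlib

noncomputable section

open MvPolynomial

/-- The polynomial ring `𝔽₂[y₁, y₂, y₃, b₁, b₂, z]`. -/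
abbrev P : Type := MvPolynomial (Fin 6) (ZMod 2)

def y₁ : P := X 0
def y₂ : P := X 1
def y₃ : P := X 2
def b₁ : P := X 3
def b₂ : P := X 4
def z : P := X 5

/-- The ideal `I = (y₁y₂, y₁y₃, y₂y₃, y₃², y₂b₁, y₃b₁, y₁b₂, y₃b₂, b₁b₂, b₁²+y₁²z, b₂²+y₂²z)`. -/
def I6 : Ideal P :=
  Ideal.span {y₁ * y₂, y₁ * y₃, y₂ * y₃, y₃ ^ 2, y₂ * b₁, y₃ * b₁, y₁ * b₂, y₃ * b₂, b₁ * b₂,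
    b₁ ^ 2 + y₁ ^ 2 * z, b₂ ^ 2 + y₂ ^ 2 * z}

/-- The quotient ring `A = P/I`. -/
abbrev A : Type := P ⧸ I6

/-- The element `k = z + b₁ + y₁² + b₂ + y₂²`. -/
def k : P := z + b₁ + y₁ ^ 2 + b₂ + y₂ ^ 2

/-- The quotient `A/(k)`. -/
abbrev B : Type := A ⧸ Ideal.span {Ideal.Quotient.mk I6 k}

/-- The canonical map `P → B`. -/
def toB (p : P) : B :=
  Ideal.Quotient.mk (Ideal.span {Ideal.Quotient.mk I6 k}) (Ideal.Quotient.mk I6 p)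

/-!
Put `J = I + (k)`, so that `A/(k) = P/J`, and `K = J + (y₃)`. Since `y₃ w ∈ I`, the claim is that
`w` is a non-zero-divisor modulo `K`. Modulo `K` the variables `y₃` and `z` can be eliminated,
and `P/K` becomes the fibre product over `𝔽₂` of the two branches `𝔽₂[y₁, b₁]/(g₁)` and
`𝔽₂[y₂, b₂]/(g₂)`, where `gᵢ = bᵢ² + yᵢ²(bᵢ + yᵢ²)`: the substitutions `σ₁`, `σ₂` project onto the
branches and `σ₀` onto their common point, and `p ≡ σ₁ p + σ₂ p - σ₀ p` modulo `K` because the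
two branch ideals `(y₁, b₁)` and `(y₂, b₂)` multiply into `I`. Now `σᵢ w = yᵢ³`, and `yᵢ` is a
prime not dividing `gᵢ`, so `p w ∈ K` forces `σᵢ p ∈ (gᵢ) ⊆ K`; and then `σ₀ p = σ₀ (σ₁ p) = 0`.
-/

theorem Irreducible.dvd_of_dvd_mul_pow_of_not_dvd {M : Type*} [CommMonoid M]
    [DecompositionMonoid M] {x g q : M} (hx : Irreducible x) (hg : ¬ x ∣ g) {n : ℕ}
    (h : g ∣ q * x ^ n) : g ∣ q :=
  (hx.isRelPrime_iff_not_dvd.2 hg).symm.pow_right.dvd_of_dvd_mul_right h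

theorem MvPolynomial.algHom_sub_mem_of_forall_X {R σ S : Type*} [CommRing R] [CommRing S]
    [Algebra R S] {f g : MvPolynomial σ R →ₐ[R] S} {I : Ideal S}
    (h : ∀ i, f (X i) - g (X i) ∈ I) (p : MvPolynomial σ R) : f p - g p ∈ I := by
  have : (Ideal.Quotient.mkₐ R I).comp f = (Ideal.Quotient.mkₐ R I).comp g :=
    algHom_ext fun i => by simpa [Ideal.Quotient.mkₐ_eq_mk, Ideal.Quotient.eq] using h i
  simpa [Ideal.Quotient.mkₐ_eq_mk, Ideal.Quotient.eq] using AlgHom.congr_fun this p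

theorem RingHom.mem_span_singleton_map_iff {R S : Type*} [CommRing R] [CommRing S]
    {f : R →+* S} (hf : Function.Surjective f) {p y : R} :
    f p ∈ Ideal.span {f y} ↔ p ∈ RingHom.ker f ⊔ Ideal.span {y} := by
  rw [← Set.image_singleton, ← Ideal.map_span, ← Ideal.mem_comap,
    Ideal.comap_map_of_surjective f hf, sup_comm, RingHom.ker_eq_comap_bot]

@[simps]
def AlgHom.addSub {R A Q : Type*} [CommSemiring R] [Semiring A] [CommRing Q] [Algebra R A]
    [Algebra R Q] (f₁ f₂ f₀ : A →ₐ[R] Q) (h : ∀ a b, (f₁ a - f₀ a) * (f₂ b - f₀ b) = 0) :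
    A →ₐ[R] Q where
  toFun a := f₁ a + f₂ a - f₀ a
  map_one' := by simp
  map_mul' a b := by simp only [map_mul]; linear_combination -h a b - h b a
  map_zero' := by simp
  map_add' a b := by simp only [map_add]; ring
  commutes' r := by simp

def w : P := y₁ * z + y₁ * b₁ + y₂ * z + y₂ * b₂

def J : Ideal P := I6 ⊔ Ideal.span {k}

def K : Ideal P := J ⊔ Ideal.span {y₃}

lemma I6_le_K : I6 ≤ K := le_sup_left.trans le_sup_left

lemma k_mem_K : k ∈ K := Ideal.mem_sup_left (Ideal.mem_sup_right (Ideal.mem_span_singleton_self k))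

lemma y₃_mem_K : y₃ ∈ K := Ideal.mem_sup_right (Ideal.mem_span_singleton_self y₃)

lemma y₃_mul_w_mem_I6 : y₃ * w ∈ I6 := by
  have : y₃ * w = z * (y₁ * y₃) + y₁ * (y₃ * b₁) + z * (y₂ * y₃) + y₂ * (y₃ * b₂) := by
    unfold w; ring
  rw [this]
  exact add_mem (add_mem (add_mem (Ideal.mul_mem_left _ _ (Ideal.subset_span (by simp)))
    (Ideal.mul_mem_left _ _ (Ideal.subset_span (by simp))))
    (Ideal.mul_mem_left _ _ (Ideal.subset_span (by simp))))
    (Ideal.mul_mem_left _ _ (Ideal.subset_span (by simp)))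

-- `z` is sent to the solution of `k = 0` on the branch.
def σ₁ : P →ₐ[ZMod 2] P := aeval ![y₁, 0, 0, b₁, 0, b₁ + y₁ ^ 2]
def σ₂ : P →ₐ[ZMod 2] P := aeval ![0, y₂, 0, 0, b₂, b₂ + y₂ ^ 2]
def σ₀ : P →ₐ[ZMod 2] P := aeval 0

@[simp] lemma σ₁_y₁ : σ₁ y₁ = y₁ := aeval_X _ _
@[simp] lemma σ₁_y₂ : σ₁ y₂ = 0 := aeval_X _ _
@[simp] lemma σ₁_y₃ : σ₁ y₃ = 0 := aeval_X _ _
@[simp] lemma σ₁_b₁ : σ₁ b₁ = b₁ := aeval_X _ _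
@[simp] lemma σ₁_b₂ : σ₁ b₂ = 0 := aeval_X _ _
@[simp] lemma σ₁_z : σ₁ z = b₁ + y₁ ^ 2 := aeval_X _ _

@[simp] lemma σ₂_y₁ : σ₂ y₁ = 0 := aeval_X _ _
@[simp] lemma σ₂_y₂ : σ₂ y₂ = y₂ := aeval_X _ _
@[simp] lemma σ₂_y₃ : σ₂ y₃ = 0 := aeval_X _ _
@[simp] lemma σ₂_b₁ : σ₂ b₁ = 0 := aeval_X _ _
@[simp] lemma σ₂_b₂ : σ₂ b₂ = b₂ := aeval_X _ _
@[simp] lemma σ₂_z : σ₂ z = b₂ + y₂ ^ 2 := aeval_X _ _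

lemma σ₀_comp_σ₁ : σ₀.comp σ₁ = σ₀ :=
  algHom_ext fun i => by fin_cases i <;> simp [σ₀, σ₁, y₁, b₁]

lemma σ₁_sub_σ₀_mem (p : P) : σ₁ p - σ₀ p ∈ Ideal.span {y₁, b₁} := by
  have hy : y₁ ∈ Ideal.span {y₁, b₁} := Ideal.subset_span (by simp)
  have hb : b₁ ∈ Ideal.span {y₁, b₁} := Ideal.subset_span (by simp)
  refine algHom_sub_mem_of_forall_X (fun i => ?_) p
  fin_cases i <;> simp [σ₁, σ₀, hy, hb, add_mem hb (Ideal.pow_mem_of_mem _ hy 2 two_pos)]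

lemma σ₂_sub_σ₀_mem (p : P) : σ₂ p - σ₀ p ∈ Ideal.span {y₂, b₂} := by
  have hy : y₂ ∈ Ideal.span {y₂, b₂} := Ideal.subset_span (by simp)
  have hb : b₂ ∈ Ideal.span {y₂, b₂} := Ideal.subset_span (by simp)
  refine algHom_sub_mem_of_forall_X (fun i => ?_) p
  fin_cases i <;> simp [σ₂, σ₀, hy, hb, add_mem hb (Ideal.pow_mem_of_mem _ hy 2 two_pos)]

lemma span_mul_span_le_I6 : Ideal.span {y₁, b₁} * Ideal.span {y₂, b₂} ≤ I6 := by
  rw [Ideal.span_mul_span', Ideal.span_le]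
  rintro _ ⟨a, ha, b, hb, rfl⟩
  rcases ha with rfl | rfl <;> rcases hb with rfl | rfl <;>
    apply Ideal.subset_span <;> simp [mul_comm b₁ y₂]

lemma sub_σ_decomposition_mem_K (p : P) : p - (σ₁ p + σ₂ p - σ₀ p) ∈ K := by
  let π := Ideal.Quotient.mkₐ (ZMod 2) K
  have orth (a b : P) : (π.comp σ₁ a - π.comp σ₀ a) * (π.comp σ₂ b - π.comp σ₀ b) = 0 := by
    simp only [AlgHom.comp_apply, ← map_sub, ← map_mul, π, Ideal.Quotient.mkₐ_eq_mk,
      Ideal.Quotient.eq_zero_iff_mem]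
    exact I6_le_K (span_mul_span_le_I6 (Ideal.mul_mem_mul (σ₁_sub_σ₀_mem a) (σ₂_sub_σ₀_mem b)))
  have hz : z - (b₁ + y₁ ^ 2 + (b₂ + y₂ ^ 2)) ∈ K := by
    have : z - (b₁ + y₁ ^ 2 + (b₂ + y₂ ^ 2)) = k := by
      unfold k
      linear_combination -(b₁ + y₁ ^ 2 + (b₂ + y₂ ^ 2)) * CharTwo.two_eq_zero (R := P)
    exact this ▸ k_mem_K
  have decomp : π = (π.comp σ₁).addSub (π.comp σ₂) (π.comp σ₀) orth := by
    refine algHom_ext fun i => ?_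
    simp only [π, AlgHom.addSub_apply, AlgHom.comp_apply, Ideal.Quotient.mkₐ_eq_mk, ← map_add,
      ← map_sub, Ideal.Quotient.eq]
    fin_cases i <;> simp [σ₁, σ₂, σ₀, y₁, y₂, b₁, b₂]
    exacts [y₃_mem_K, hz]
  have := AlgHom.congr_fun decomp p
  simp only [π, AlgHom.addSub_apply, AlgHom.comp_apply, Ideal.Quotient.mkₐ_eq_mk, ← map_add,
    ← map_sub] at this
  exact Ideal.Quotient.eq.1 this

def g₁ : P := b₁ ^ 2 + y₁ ^ 2 * (b₁ + y₁ ^ 2)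
def g₂ : P := b₂ ^ 2 + y₂ ^ 2 * (b₂ + y₂ ^ 2)

lemma g₁_mem_K : g₁ ∈ K := by
  have : g₁ = (b₁ ^ 2 + y₁ ^ 2 * z) + y₁ ^ 2 * k + y₁ * (y₁ * b₂) + (y₁ * y₂) * (y₁ * y₂) := by
    unfold g₁ k
    linear_combination (-y₁ ^ 2 * (z + b₂) - y₁ ^ 2 * y₂ ^ 2) * CharTwo.two_eq_zero (R := P)
  rw [this]
  exact add_mem (add_mem (add_mem (I6_le_K (Ideal.subset_span (by simp)))
      (Ideal.mul_mem_left _ _ k_mem_K))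
    (Ideal.mul_mem_left _ _ (I6_le_K (Ideal.subset_span (by simp)))))
    (Ideal.mul_mem_left _ _ (I6_le_K (Ideal.subset_span (by simp))))

lemma g₂_mem_K : g₂ ∈ K := by
  have : g₂ = (b₂ ^ 2 + y₂ ^ 2 * z) + y₂ ^ 2 * k + y₂ * (y₂ * b₁) + (y₁ * y₂) * (y₁ * y₂) := by
    unfold g₂ k
    linear_combination (-y₂ ^ 2 * (z + b₁) - y₁ ^ 2 * y₂ ^ 2) * CharTwo.two_eq_zero (R := P)
  rw [this]
  exact add_mem (add_mem (add_mem (I6_le_K (Ideal.subset_span (by simp)))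
      (Ideal.mul_mem_left _ _ k_mem_K))
    (Ideal.mul_mem_left _ _ (I6_le_K (Ideal.subset_span (by simp)))))
    (Ideal.mul_mem_left _ _ (I6_le_K (Ideal.subset_span (by simp))))

lemma map_σ₁_K_le : K.map σ₁ ≤ Ideal.span {g₁} := by
  have hk : σ₁ k = 0 := by
    simp only [k, map_add, map_pow, σ₁_y₁, σ₁_y₂, σ₁_b₁, σ₁_b₂, σ₁_z]
    linear_combination (b₁ + y₁ ^ 2) * CharTwo.two_eq_zero (R := P)
  simp [K, J, I6, Ideal.map_sup, Ideal.map_span, Set.image_insert_eq, hk, g₁]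

lemma map_σ₂_K_le : K.map σ₂ ≤ Ideal.span {g₂} := by
  have hk : σ₂ k = 0 := by
    simp only [k, map_add, map_pow, σ₂_y₂, σ₂_y₁, σ₂_b₂, σ₂_b₁, σ₂_z]
    linear_combination (b₂ + y₂ ^ 2) * CharTwo.two_eq_zero (R := P)
  simp [K, J, I6, Ideal.map_sup, Ideal.map_span, Set.image_insert_eq, hk, g₂]

lemma σ₁_w : σ₁ w = y₁ ^ 3 := by
  simp only [w, map_add, map_mul, σ₁_y₁, σ₁_y₂, σ₁_b₁, σ₁_b₂, σ₁_z]
  linear_combination y₁ * b₁ * CharTwo.two_eq_zero (R := P)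

lemma σ₂_w : σ₂ w = y₂ ^ 3 := by
  simp only [w, map_add, map_mul, σ₂_y₁, σ₂_y₂, σ₂_b₁, σ₂_b₂, σ₂_z]
  linear_combination y₂ * b₂ * CharTwo.two_eq_zero (R := P)

lemma not_y₁_dvd_g₁ : ¬ y₁ ∣ g₁ := by
  intro h
  have hb : y₁ ∣ b₁ ^ 2 :=
    (dvd_add_left (dvd_mul_of_dvd_left (dvd_pow_self y₁ two_ne_zero) _)).mp h
  exact absurd (X_dvd_X.1 (X_prime.dvd_of_dvd_pow hb)) (by decide)

lemma not_y₂_dvd_g₂ : ¬ y₂ ∣ g₂ := by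
  intro h
  have hb : y₂ ∣ b₂ ^ 2 :=
    (dvd_add_left (dvd_mul_of_dvd_left (dvd_pow_self y₂ two_ne_zero) _)).mp h
  exact absurd (X_dvd_X.1 (X_prime.dvd_of_dvd_pow hb)) (by decide)

lemma σ₁_mem_span_g₁ {p : P} (h : p * w ∈ K) : σ₁ p ∈ Ideal.span {g₁} := by
  have := map_σ₁_K_le (Ideal.mem_map_of_mem σ₁ h)
  rw [map_mul, σ₁_w, Ideal.mem_span_singleton] at this
  exact Ideal.mem_span_singleton.2
    ((X_prime : Prime y₁).irreducible.dvd_of_dvd_mul_pow_of_not_dvd not_y₁_dvd_g₁ this)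

lemma σ₂_mem_span_g₂ {p : P} (h : p * w ∈ K) : σ₂ p ∈ Ideal.span {g₂} := by
  have := map_σ₂_K_le (Ideal.mem_map_of_mem σ₂ h)
  rw [map_mul, σ₂_w, Ideal.mem_span_singleton] at this
  exact Ideal.mem_span_singleton.2
    ((X_prime : Prime y₂).irreducible.dvd_of_dvd_mul_pow_of_not_dvd not_y₂_dvd_g₂ this)

lemma mem_K_of_mul_w_mem {p : P} (h : p * w ∈ K) : p ∈ K := by
  have h₁ : σ₁ p ∈ K := (Ideal.span_singleton_le_iff_mem K).2 g₁_mem_K (σ₁_mem_span_g₁ h)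
  have h₂ : σ₂ p ∈ K := (Ideal.span_singleton_le_iff_mem K).2 g₂_mem_K (σ₂_mem_span_g₂ h)
  have h₀ : σ₀ p = 0 := by
    obtain ⟨c, hc⟩ := Ideal.mem_span_singleton'.1 (σ₁_mem_span_g₁ h)
    rw [← σ₀_comp_σ₁, AlgHom.comp_apply, ← hc, map_mul]
    simp [g₁, σ₀, y₁, b₁]
  have := add_mem (sub_σ_decomposition_mem_K p) (add_mem h₁ h₂)
  rwa [h₀, sub_zero, sub_add_cancel] at this

lemma mul_w_mem_J_iff (p : P) : p * w ∈ J ↔ p ∈ K := by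
  refine ⟨fun h => mem_K_of_mul_w_mem (Ideal.mem_sup_left h), fun h => ?_⟩
  obtain ⟨j, hj, s, hs, rfl⟩ := Submodule.mem_sup.1 h
  obtain ⟨c, rfl⟩ := Ideal.mem_span_singleton'.1 hs
  rw [add_mul, mul_assoc]
  exact add_mem (Ideal.mul_mem_right _ _ hj)
    (Ideal.mul_mem_left _ _ (Ideal.mem_sup_left y₃_mul_w_mem_I6))

def toBHom : P →+* B := (Ideal.Quotient.mk _).comp (Ideal.Quotient.mk I6)

lemma toBHom_surjective : Function.Surjective toBHom :=
  Ideal.Quotient.mk_surjective.comp Ideal.Quotient.mk_surjective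

lemma ker_toBHom : RingHom.ker toBHom = J := by
  rw [toBHom, ← RingHom.comap_ker, Ideal.mk_ker, ← Set.image_singleton, ← Ideal.map_span,
    Ideal.comap_map_of_surjective _ Ideal.Quotient.mk_surjective, ← RingHom.ker_eq_comap_bot,
    Ideal.mk_ker, J, sup_comm]

/-- In `A/(k)`, the annihilator of the image of `y₁z + y₁b₁ + y₂z + y₂b₂` is the ideal
generated by the image of `y₃`. -/
theorem stmt19 (a : B) :
    a * toB (y₁ * z + y₁ * b₁ + y₂ * z + y₂ * b₂) = 0 ↔ a ∈ Ideal.span {toB y₃} := by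
  obtain ⟨p, rfl⟩ := toBHom_surjective a
  change toBHom (p * w) = 0 ↔ toBHom p ∈ Ideal.span {toBHom y₃}
  rw [RingHom.mem_span_singleton_map_iff (R := P) (S := B) toBHom_surjective,
    ← RingHom.mem_ker (R := P) (S := B), ker_toBHom]
  exact mul_w_mem_J_iff p

end
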